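/- arXiv:2503.24275 — 2 statements merged into one kernel-verified Lean document; each statement's English description precedes it below -/
import Mathlib

section
/- For σ < 1/2 and t > 0, with s = σ + it, the quantity i(Ψ(1 − s̄/2) − Ψ(1 − s/2) − Ψ((1+s)/2) + Ψ((1+s̄)/2)) is a positive real number. -/
/-!
The Weierstrass product `1 / Γ(z) = z e^{γ z} ∏ₙ (1 + z/(n+1)) e^{-z/(n+1)}` converges locally
uniformly on `ℂ`, so it may be differentiated logarithmically term by term; this gives
`Ψ(a) - Ψ(b) = ∑ₖ (1/(b+k) - 1/(a+k))`. With `p = 1 - s/2` and `q = (1+s)/2` the quantity is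
`i(Ψ(p̄) - Ψ(p)) + i(Ψ(q̄) - Ψ(q)) = ∑ₖ (t/|q+k|² - t/|p+k|²)`. Every term is positive: the
imaginary parts of `p` and `q` are `∓t/2`, while `|Re q + k| < Re p + k` because
`Re p - Re q = 1/2 - σ > 0` and `Re p + Re q = 3/2`.
-/

open Complex Filter Topology

noncomputable def X (s : ℂ) : ℂ :=
  ((5 : ℂ) / Real.pi) ^ ((1 : ℂ)/2 - s) * Complex.Gamma (1 - s/2) / Complex.Gamma ((1 + s)/2)

noncomputable def Ψ (z : ℂ) : ℂ := deriv Complex.Gamma z / Complex.Gamma z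

local notation "γ" => Real.eulerMascheroniConstant

namespace Complex

noncomputable def gammaFactor (z : ℂ) (n : ℕ) : ℂ := (1 + z / (n + 1)) * exp (-(z / (n + 1)))

lemma one_add_div_natCast_add_one (z : ℂ) (j : ℕ) :
    1 + z / (j + 1) = (z + (j + 1)) / (j + 1) := by
  rw [add_div, div_self (by exact_mod_cast Nat.succ_ne_zero j), add_comm]

lemma norm_one_add_mul_exp_neg_sub_one_le {w : ℂ} (hw : ‖w‖ ≤ 1) :
    ‖(1 + w) * exp (-w) - 1‖ ≤ Real.exp 1 * ‖w‖ ^ 2 := by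
  have h : (1 + w) * exp (-w) - 1 = -(exp (-w) * (exp w - 1 - w)) := by
    rw [mul_sub, mul_sub, ← exp_add, neg_add_cancel, exp_zero]
    ring
  rw [h, norm_neg, norm_mul]
  gcongr
  · calc ‖exp (-w)‖ ≤ Real.exp ‖-w‖ := norm_exp_le_exp_norm _
      _ ≤ Real.exp 1 := Real.exp_le_exp.mpr (by rwa [norm_neg])
  · exact norm_exp_sub_one_sub_id_le hw

lemma hasProdLocallyUniformlyOn_gammaFactor :
    HasProdLocallyUniformlyOn (fun n z ↦ gammaFactor z n) (fun z ↦ ∏' n, gammaFactor z n)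
      Set.univ := by
  refine hasProdLocallyUniformlyOn_of_forall_compact isOpen_univ fun K _ hK ↦ ?_
  obtain ⟨R, hR⟩ := hK.isBounded.exists_norm_le
  have hu : Summable fun n : ℕ ↦ Real.exp 1 * R ^ 2 / ((n : ℝ) + 1) ^ 2 := by
    simpa [div_eq_mul_inv] using ((summable_nat_add_iff 1).mpr
      (Real.summable_one_div_nat_pow.mpr one_lt_two)).mul_left (Real.exp 1 * R ^ 2)
  have hbound : ∀ᶠ n : ℕ in atTop, ∀ z ∈ K,
      ‖gammaFactor z n - 1‖ ≤ Real.exp 1 * R ^ 2 / ((n : ℝ) + 1) ^ 2 := by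
    filter_upwards [eventually_ge_atTop ⌈R⌉₊] with n hn z hz
    have hnorm : ‖(n : ℂ) + 1‖ = n + 1 := by exact_mod_cast norm_natCast (n + 1)
    have hzn : ‖z / (n + 1)‖ ≤ R / (n + 1) := by
      rw [norm_div, hnorm]
      gcongr
      exact hR z hz
    have hRn : R / (n + 1) ≤ 1 := by
      rw [div_le_one (by positivity)]
      linarith [Nat.ceil_le.mp hn]
    calc ‖gammaFactor z n - 1‖ ≤ Real.exp 1 * ‖z / (n + 1)‖ ^ 2 :=
          norm_one_add_mul_exp_neg_sub_one_le (hzn.trans hRn)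
      _ ≤ Real.exp 1 * (R / (n + 1)) ^ 2 := by gcongr
      _ = Real.exp 1 * R ^ 2 / ((n : ℝ) + 1) ^ 2 := by rw [div_pow, mul_div_assoc]
  simpa using Summable.hasProdUniformlyOn_nat_one_add hK hu hbound
    fun n ↦ by unfold gammaFactor; fun_prop

lemma tendsto_prod_range_gammaFactor (z : ℂ) :
    Tendsto (fun n ↦ ∏ j ∈ Finset.range n, gammaFactor z j) atTop
      (𝓝 (∏' n, gammaFactor z n)) :=
  hasProdLocallyUniformlyOn_gammaFactor.tendstoLocallyUniformlyOn_finsetRange.tendsto_at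
    (Set.mem_univ z)

lemma differentiable_tprod_gammaFactor : Differentiable ℂ fun z ↦ ∏' n, gammaFactor z n :=
  differentiableOn_univ.mp <|
    hasProdLocallyUniformlyOn_gammaFactor.tendstoLocallyUniformlyOn_finsetRange.differentiableOn
      (Eventually.of_forall fun n ↦ by unfold gammaFactor; fun_prop) isOpen_univ

lemma self_mul_prod_one_add_div (z : ℂ) (n : ℕ) :
    z * ∏ j ∈ Finset.range n, (1 + z / (j + 1))
      = (∏ j ∈ Finset.range (n + 1), (z + j)) / n.factorial := by
  have hfactor (j : ℕ) : (1 + z / (j + 1)) * (j + 1) = z + (j + 1) := by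
    rw [one_add_div_natCast_add_one, div_mul_cancel₀ _ (by exact_mod_cast Nat.succ_ne_zero j)]
  rw [eq_div_iff (by exact_mod_cast n.factorial_ne_zero), Finset.prod_range_succ',
    ← Finset.prod_range_add_one_eq_factorial, Nat.cast_prod, mul_assoc,
    ← Finset.prod_mul_distrib]
  push_cast
  simp only [hfactor]
  ring

lemma prod_exp_neg_div (z : ℂ) (n : ℕ) :
    ∏ j ∈ Finset.range n, exp (-(z / (j + 1))) = exp (-(z * (harmonic n : ℝ))) := by
  rw [← exp_sum, harmonic]
  push_cast
  rw [Finset.mul_sum, ← Finset.sum_neg_distrib]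
  simp [div_eq_mul_inv]

lemma GammaSeq_mul_self_mul_prod_gammaFactor {z : ℂ} (hz : ∀ m : ℕ, z ≠ -m) {n : ℕ}
    (hn : n ≠ 0) :
    GammaSeq z n * (z * ∏ j ∈ Finset.range n, gammaFactor z j)
      = exp (z * (Real.log n - (harmonic n : ℝ))) := by
  have hprod : ∏ j ∈ Finset.range (n + 1), (z + j) ≠ 0 :=
    Finset.prod_ne_zero_iff.mpr fun j _ h ↦ hz j (eq_neg_of_add_eq_zero_left h)
  have hfact : (n.factorial : ℂ) ≠ 0 := by exact_mod_cast n.factorial_ne_zero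
  simp only [gammaFactor, Finset.prod_mul_distrib, ← mul_assoc, self_mul_prod_one_add_div,
    prod_exp_neg_div, GammaSeq]
  rw [cpow_def_of_ne_zero (by exact_mod_cast hn), ← natCast_log]
  field_simp
  rw [← exp_add]
  congr 1
  push_cast
  ring

lemma Gamma_mul_self_mul_tprod_gammaFactor {z : ℂ} (hz : ∀ m : ℕ, z ≠ -m) :
    Gamma z * (z * ∏' n, gammaFactor z n) = exp (-γ * z) := by
  have hlim := (GammaSeq_tendsto_Gamma z).mul ((tendsto_prod_range_gammaFactor z).const_mul z)
  have hγ : Tendsto (fun n : ℕ ↦ z * ((Real.log n - (harmonic n : ℝ) : ℝ) : ℂ)) atTop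
      (𝓝 (-γ * z)) := by
    have := ((continuous_ofReal.tendsto _).comp Real.tendsto_harmonic_sub_log).neg.const_mul z
    simpa [Function.comp_def, mul_comm z] using this
  refine tendsto_nhds_unique (hlim.congr' ?_) ((continuous_exp.tendsto _).comp hγ)
  filter_upwards [eventually_ne_atTop 0] with n hn
  rw [GammaSeq_mul_self_mul_prod_gammaFactor hz hn]
  push_cast
  rfl

lemma logDeriv_exp_const_mul (c z : ℂ) : logDeriv (fun w ↦ exp (c * w)) z = c := by
  rw [logDeriv_apply, ((hasDerivAt_id' z).const_mul c).cexp.deriv]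
  field_simp [exp_ne_zero]

lemma digamma_eq_neg_sub_logDeriv_tprod_gammaFactor {z : ℂ} (hz : ∀ m : ℕ, z ≠ -m) :
    digamma z = -γ - z⁻¹ - logDeriv (fun w ↦ ∏' n, gammaFactor w n) z := by
  -- `1 / Γ` is continuous and nonzero at `z`, so the points near `z` are not poles either.
  have hident : ∀ᶠ w in 𝓝 z, Gamma w * (w * ∏' n, gammaFactor w n) = exp (-γ * w) := by
    filter_upwards [(differentiable_one_div_Gamma z).continuousAt.eventually_ne
      (inv_ne_zero (Gamma_ne_zero hz))] with w hw
    exact Gamma_mul_self_mul_tprod_gammaFactor fun m h ↦ hw (by simp [h, Gamma_neg_nat_eq_zero])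
  have hne : Gamma z * (z * ∏' n, gammaFactor z n) ≠ 0 := hident.self_of_nhds ▸ exp_ne_zero _
  simp only [mul_ne_zero_iff] at hne
  have key := (logDeriv_congr_nhds hident).self_of_nhds
  rw [logDeriv_mul (f := Gamma) (g := fun w ↦ w * ∏' n, gammaFactor w n) z hne.1
      (mul_ne_zero hne.2.1 hne.2.2) (differentiableAt_Gamma z hz)
      (differentiableAt_id.mul (differentiable_tprod_gammaFactor z)),
    logDeriv_mul (f := fun w ↦ w) z hne.2.1 hne.2.2 differentiableAt_id
      (differentiable_tprod_gammaFactor z), logDeriv_exp_const_mul, logDeriv_id'] at key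
  rw [digamma_def]
  linear_combination key

lemma gammaFactor_ne_zero {z : ℂ} {j : ℕ} (h : z + (j + 1) ≠ 0) : gammaFactor z j ≠ 0 :=
  mul_ne_zero (by
    rw [one_add_div_natCast_add_one]
    exact div_ne_zero h (by exact_mod_cast Nat.succ_ne_zero j)) (exp_ne_zero _)

lemma logDeriv_gammaFactor {z : ℂ} {j : ℕ} (h : z + (j + 1) ≠ 0) :
    logDeriv (fun w ↦ gammaFactor w j) z = (z + (j + 1))⁻¹ - ((j : ℂ) + 1)⁻¹ := by
  have hj : (j : ℂ) + 1 ≠ 0 := by exact_mod_cast Nat.succ_ne_zero j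
  have hd : HasDerivAt (fun w : ℂ ↦ 1 + w / (j + 1)) (1 / (j + 1)) z := by
    simpa using ((hasDerivAt_id' z).div_const ((j : ℂ) + 1)).const_add 1
  have he : HasDerivAt (fun w : ℂ ↦ exp (-(w / (j + 1))))
      (exp (-(z / (j + 1))) * -(1 / (j + 1))) z :=
    ((hasDerivAt_id' z).div_const ((j : ℂ) + 1)).neg.cexp.congr_deriv
      (by simp [div_eq_mul_inv])
  have hg : HasDerivAt (fun w ↦ gammaFactor w j) _ z := hd.fun_mul he
  rw [logDeriv_apply, hg.deriv, gammaFactor, one_add_div_natCast_add_one]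
  field_simp [exp_ne_zero]
  ring

lemma tendsto_sum_inv_sub_inv_logDeriv_tprod_gammaFactor {z : ℂ} (hz : ∀ m : ℕ, z ≠ -m) :
    Tendsto (fun n ↦ ∑ j ∈ Finset.range n, ((z + (j + 1))⁻¹ - ((j : ℂ) + 1)⁻¹)) atTop
      (𝓝 (logDeriv (fun w ↦ ∏' n, gammaFactor w n) z)) := by
  have hshift (j : ℕ) : z + (j + 1) ≠ 0 := fun h ↦
    hz (j + 1) (by push_cast; exact eq_neg_of_add_eq_zero_left h)
  have htprod : ∏' n, gammaFactor z n ≠ 0 :=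
    right_ne_zero_of_mul (right_ne_zero_of_mul
      ((Gamma_mul_self_mul_tprod_gammaFactor hz).symm ▸ exp_ne_zero _))
  refine (logDeriv_tendsto isOpen_univ (Set.mem_univ z)
    hasProdLocallyUniformlyOn_gammaFactor.tendstoLocallyUniformlyOn_finsetRange
    (Eventually.of_forall fun n ↦ by unfold gammaFactor; fun_prop) htprod).congr fun n ↦ ?_
  rw [logDeriv_prod (f := fun j w ↦ gammaFactor w j) (fun j _ ↦ gammaFactor_ne_zero (hshift j))
    (fun j _ ↦ by unfold gammaFactor; fun_prop)]
  exact Finset.sum_congr rfl fun j _ ↦ logDeriv_gammaFactor (hshift j)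

lemma tendsto_sum_inv_sub_inv_digamma_sub_digamma {a b : ℂ} (ha : ∀ m : ℕ, a ≠ -m)
    (hb : ∀ m : ℕ, b ≠ -m) :
    Tendsto (fun n ↦ ∑ k ∈ Finset.range n, ((b + k)⁻¹ - (a + k)⁻¹)) atTop
      (𝓝 (digamma a - digamma b)) := by
  rw [← tendsto_add_atTop_iff_nat 1, digamma_eq_neg_sub_logDeriv_tprod_gammaFactor ha,
    digamma_eq_neg_sub_logDeriv_tprod_gammaFactor hb]
  convert ((tendsto_sum_inv_sub_inv_logDeriv_tprod_gammaFactor hb).sub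
    (tendsto_sum_inv_sub_inv_logDeriv_tprod_gammaFactor ha)).const_add (b⁻¹ - a⁻¹) using 1
  · funext n
    simp only [Finset.sum_range_succ', ← Finset.sum_sub_distrib, sub_sub_sub_cancel_right,
      Nat.cast_add, Nat.cast_one, Nat.cast_zero, add_zero]
    exact add_comm _ _
  · congr 1
    ring

lemma I_mul_inv_sub_inv_conj (w : ℂ) :
    I * (w⁻¹ - (starRingEnd ℂ w)⁻¹) = ((2 * w.im / normSq w : ℝ) : ℂ) := by
  rw [← map_inv₀, sub_conj, inv_im]
  push_cast
  rw [mul_comm I, mul_assoc, I_mul_I]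
  field_simp

lemma tendsto_sum_I_mul_digamma_conj_sub_digamma {z : ℂ} (hz : ∀ m : ℕ, z ≠ -m) :
    Tendsto (fun n ↦ ((∑ k ∈ Finset.range n, 2 * z.im / normSq (z + k) : ℝ) : ℂ)) atTop
      (𝓝 (I * (digamma (starRingEnd ℂ z) - digamma z))) := by
  have hconj (m : ℕ) : starRingEnd ℂ z ≠ -m := fun h ↦
    hz m (by simpa using congrArg (starRingEnd ℂ) h)
  refine ((tendsto_sum_inv_sub_inv_digamma_sub_digamma hconj hz).const_mul I).congr fun n ↦ ?_
  rw [Finset.mul_sum, ofReal_sum]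
  refine Finset.sum_congr rfl fun k _ ↦ ?_
  have := I_mul_inv_sub_inv_conj (z + k)
  rwa [map_add, map_natCast, add_im, natCast_im, add_zero] at this

lemma im_div_normSq_add_natCast_add_pos {p q : ℂ} (hq : 0 < q.im) (him : p.im = -q.im)
    (hre : q.re < p.re) (hre' : 0 < p.re + q.re) (k : ℕ) :
    0 < 2 * p.im / normSq (p + k) + 2 * q.im / normSq (q + k) := by
  have hpos : 0 < normSq (q + k) := normSq_pos.mpr fun h ↦ by
    simpa [hq.ne'] using congrArg im h
  have hlt : normSq (q + k) < normSq (p + k) := by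
    simp only [normSq_apply, add_re, add_im, natCast_re, natCast_im, him, add_zero]
    nlinarith [(k.cast_nonneg : (0 : ℝ) ≤ k)]
  have hsum : 2 * p.im / normSq (p + k) + 2 * q.im / normSq (q + k)
      = 2 * q.im / normSq (q + k) - 2 * q.im / normSq (p + k) := by
    rw [him]
    ring
  rw [hsum, sub_pos]
  exact div_lt_div_of_pos_left (by linarith) hpos hlt

end Complex

lemma exists_pos_eq_of_tendsto_ofReal_sum {f : ℕ → ℝ} (hf : ∀ k, 0 < f k) {L : ℂ}
    (h : Tendsto (fun n ↦ ((∑ k ∈ Finset.range n, f k : ℝ) : ℂ)) atTop (𝓝 L)) :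
    ∃ r : ℝ, 0 < r ∧ L = r := by
  have hre : Tendsto (fun n ↦ ∑ k ∈ Finset.range n, f k) atTop (𝓝 L.re) := by
    simpa [Function.comp_def] using (continuous_re.tendsto L).comp h
  have him : L.im = 0 :=
    tendsto_nhds_unique ((continuous_im.tendsto L).comp h) (by simp [Function.comp_def])
  have hmono : Monotone fun n ↦ ∑ k ∈ Finset.range n, f k :=
    monotone_nat_of_le_succ fun n ↦ by rw [Finset.sum_range_succ]; linarith [hf n]
  refine ⟨L.re, ?_, ext rfl (by simp [him])⟩
  exact (by simpa using hf 0 : 0 < ∑ k ∈ Finset.range 1, f k).trans_le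
    (hmono.ge_of_tendsto hre 1)

lemma Ψ_eq_digamma : Ψ = digamma := rfl

theorem stmt_6 (σ t : ℝ) (hσ : σ < 1/2) (ht : 0 < t) (s : ℂ) (hs : s = σ + t * I) :
    ∃ r : ℝ, 0 < r ∧
      I * (Ψ (1 - (starRingEnd ℂ) s / 2) - Ψ (1 - s / 2) - Ψ ((1 + s) / 2)
        + Ψ ((1 + (starRingEnd ℂ) s) / 2)) = r := by
  set p := 1 - s / 2
  set q := (1 + s) / 2
  have hpre : p.re = 1 - σ / 2 := by simp [p, hs]
  have hqre : q.re = (1 + σ) / 2 := by simp [q, hs]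
  have hpim : p.im = -(t / 2) := by simp [p, hs]
  have hqim : q.im = t / 2 := by simp [q, hs]
  have hpole {z : ℂ} (hz : z.im ≠ 0) (m : ℕ) : z ≠ -m := fun h ↦ hz (by simp [h])
  have hsplit : I * (Ψ (1 - starRingEnd ℂ s / 2) - Ψ p - Ψ q + Ψ ((1 + starRingEnd ℂ s) / 2))
      = I * (digamma (starRingEnd ℂ p) - digamma p)
        + I * (digamma (starRingEnd ℂ q) - digamma q) := by
    simp only [Ψ_eq_digamma, p, q, map_sub, map_add, map_div₀, map_one, map_ofNat]
    ring
  rw [hsplit]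
  refine exists_pos_eq_of_tendsto_ofReal_sum (im_div_normSq_add_natCast_add_pos (p := p) (q := q)
    (by linarith) (by linarith) (by linarith) (by linarith)) ?_
  simpa only [Finset.sum_add_distrib, ofReal_add] using
    (tendsto_sum_I_mul_digamma_conj_sub_digamma (hpole (by linarith : p.im ≠ 0))).add
      (tendsto_sum_I_mul_digamma_conj_sub_digamma (hpole (by linarith : q.im ≠ 0)))
end

section
/- For σ fixed with σ < 1/2, the set {t > 0 : |X(σ + it)| = 1}, where X(s) = (5/π)^{1/2−s} Γ(1−s/2)/Γ((1+s)/2), contains at most one element. -/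
/-!
By Euler's limit `Γ(s) = lim n^s n! / ∏_{j ≤ n} (s + j)`, for `|b| < a` the ratio
`|Γ(a + iy)| / |Γ(b + iy)|` is a limit of `n^(a-b)` times products of the factors
`|b + j + iy| / |a + j + iy|`, each nondecreasing in `y > 0` since `(b + j)² ≤ (a + j)²`;
splitting off the factor `j = 0` through `Γ(s + 1) = s Γ(s)` makes the ratio strictly increasing.
Since `|Γ(1 - s/2)| = |Γ(conj (1 - s/2))|`, `|X(σ + it)|` is a positive constant times this ratio
at `a = 1 - σ/2`, `b = (1 + σ)/2`, `y = t/2`, and `|b| < a` holds for `σ < 1/2`. So `|X(σ + it)|`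
is strictly increasing on `t > 0` and takes the value `1` at most once.
-/

open Complex Filter Topology

lemma ofReal_add_mul_I_add_natCast (x y : ℝ) (j : ℕ) :
    (x : ℂ) + y * I + j = ((x + j : ℝ) : ℂ) + y * I := by
  push_cast; ring

lemma ofReal_add_mul_I_ne_zero {x y : ℝ} (hy : y ≠ 0) : (x : ℂ) + y * I ≠ 0 :=
  fun h => hy (by simpa using congrArg im h)

lemma Gamma_ofReal_add_mul_I_ne_zero (x : ℝ) {y : ℝ} (hy : y ≠ 0) :
    Gamma ((x : ℂ) + y * I) ≠ 0 :=
  Gamma_ne_zero fun _ h => hy (by simpa using congrArg im h)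

lemma sq_norm_mul_sub_sq_norm_mul (p q y₁ y₂ : ℝ) :
    (‖(p : ℂ) + y₂ * I‖ * ‖(q : ℂ) + y₁ * I‖) ^ 2 - (‖(p : ℂ) + y₁ * I‖ * ‖(q : ℂ) + y₂ * I‖) ^ 2
      = (q ^ 2 - p ^ 2) * (y₂ ^ 2 - y₁ ^ 2) := by
  simp only [mul_pow, Complex.sq_norm, normSq_add_mul_I]
  ring

lemma norm_mul_norm_le_of_sq_le {p q y₁ y₂ : ℝ} (hpq : p ^ 2 ≤ q ^ 2) (hy : y₁ ^ 2 ≤ y₂ ^ 2) :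
    ‖(p : ℂ) + y₁ * I‖ * ‖(q : ℂ) + y₂ * I‖ ≤ ‖(p : ℂ) + y₂ * I‖ * ‖(q : ℂ) + y₁ * I‖ := by
  rw [← pow_le_pow_iff_left₀ (by positivity) (by positivity) two_ne_zero, ← sub_nonneg,
    sq_norm_mul_sub_sq_norm_mul]
  exact mul_nonneg (sub_nonneg.2 hpq) (sub_nonneg.2 hy)

lemma norm_mul_norm_lt_of_sq_lt {p q y₁ y₂ : ℝ} (hpq : p ^ 2 < q ^ 2) (hy : y₁ ^ 2 < y₂ ^ 2) :
    ‖(p : ℂ) + y₁ * I‖ * ‖(q : ℂ) + y₂ * I‖ < ‖(p : ℂ) + y₂ * I‖ * ‖(q : ℂ) + y₁ * I‖ := by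
  rw [← pow_lt_pow_iff_left₀ (by positivity) (by positivity) two_ne_zero, ← sub_pos,
    sq_norm_mul_sub_sq_norm_mul]
  exact mul_pos (sub_pos.2 hpq) (sub_pos.2 hy)

lemma norm_GammaSeq (s : ℂ) {n : ℕ} (hn : n ≠ 0) :
    ‖GammaSeq s n‖ = (n : ℝ) ^ s.re * n.factorial / ∏ j ∈ Finset.range (n + 1), ‖s + j‖ := by
  rw [GammaSeq, norm_div, norm_mul, norm_prod, ← ofReal_natCast,
    norm_cpow_eq_rpow_re_of_pos (by positivity)]
  simp

lemma norm_GammaSeq_mul_le {a b y₁ y₂ : ℝ} (hba : |b| ≤ a) (hy₁ : 0 < y₁) (hy : y₁ ≤ y₂)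
    {n : ℕ} (hn : n ≠ 0) :
    ‖GammaSeq (b + y₂ * I) n‖ * ‖GammaSeq (a + y₁ * I) n‖ ≤
      ‖GammaSeq (b + y₁ * I) n‖ * ‖GammaSeq (a + y₂ * I) n‖ := by
  have hy₂ : 0 < y₂ := hy₁.trans_le hy
  have hfactor (j : ℕ) :
      ‖(b : ℂ) + y₁ * I + j‖ * ‖(a : ℂ) + y₂ * I + j‖ ≤
        ‖(b : ℂ) + y₂ * I + j‖ * ‖(a : ℂ) + y₁ * I + j‖ := by
    simp only [ofReal_add_mul_I_add_natCast]
    have hj : (0 : ℝ) ≤ j := j.cast_nonneg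
    exact norm_mul_norm_le_of_sq_le
      (sq_le_sq' (by linarith [neg_abs_le b]) (by linarith [le_abs_self b]))
      (pow_le_pow_left₀ hy₁.le hy 2)
  have hprod_pos : 0 < ∏ j ∈ Finset.range (n + 1),
      ‖(b : ℂ) + y₁ * I + j‖ * ‖(a : ℂ) + y₂ * I + j‖ :=
    Finset.prod_pos fun j _ => by
      simp only [ofReal_add_mul_I_add_natCast]
      exact mul_pos (norm_pos_iff.2 (ofReal_add_mul_I_ne_zero hy₁.ne'))
        (norm_pos_iff.2 (ofReal_add_mul_I_ne_zero hy₂.ne'))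
  simp only [norm_GammaSeq _ hn, add_re, ofReal_re, mul_re, I_re, I_im, ofReal_im, mul_zero,
    mul_one, sub_zero, add_zero, div_mul_div_comm, ← Finset.prod_mul_distrib]
  rw [mul_mul_mul_comm, mul_comm ((n : ℝ) ^ b)]
  exact div_le_div_of_nonneg_left (by positivity) hprod_pos
    (Finset.prod_le_prod (fun j _ => by positivity) fun j _ => hfactor j)

lemma norm_Gamma_mul_le {a b y₁ y₂ : ℝ} (hba : |b| ≤ a) (hy₁ : 0 < y₁) (hy : y₁ ≤ y₂) :
    ‖Gamma (b + y₂ * I)‖ * ‖Gamma (a + y₁ * I)‖ ≤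
      ‖Gamma (b + y₁ * I)‖ * ‖Gamma (a + y₂ * I)‖ :=
  le_of_tendsto_of_tendsto
    ((GammaSeq_tendsto_Gamma _).norm.mul (GammaSeq_tendsto_Gamma _).norm)
    ((GammaSeq_tendsto_Gamma _).norm.mul (GammaSeq_tendsto_Gamma _).norm)
    ((eventually_ne_atTop 0).mono fun _ hn => norm_GammaSeq_mul_le hba hy₁ hy hn)

lemma norm_Gamma_add_one (x : ℝ) {y : ℝ} (hy : y ≠ 0) :
    ‖Gamma ((x + 1 : ℝ) + y * I)‖ = ‖(x : ℂ) + y * I‖ * ‖Gamma (x + y * I)‖ := by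
  rw [← norm_mul, ← Gamma_add_one _ (ofReal_add_mul_I_ne_zero hy)]
  push_cast
  ring_nf

lemma norm_Gamma_mul_lt {a b y₁ y₂ : ℝ} (hba : |b| < a) (hy₁ : 0 < y₁) (hy : y₁ < y₂) :
    ‖Gamma (b + y₂ * I)‖ * ‖Gamma (a + y₁ * I)‖ <
      ‖Gamma (b + y₁ * I)‖ * ‖Gamma (a + y₂ * I)‖ := by
  have hy₂ : 0 < y₂ := hy₁.trans hy
  have hshift := norm_Gamma_mul_le (a := a + 1) (b := b + 1)
    (abs_le.2 ⟨by linarith [neg_abs_le b], by linarith [le_abs_self b]⟩) hy₁ hy.le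
  rw [norm_Gamma_add_one _ hy₁.ne', norm_Gamma_add_one _ hy₁.ne', norm_Gamma_add_one _ hy₂.ne',
    norm_Gamma_add_one _ hy₂.ne'] at hshift
  have hfirst := norm_mul_norm_lt_of_sq_lt (sq_lt_sq' (neg_lt_of_abs_lt hba) (lt_of_abs_lt hba))
    (pow_lt_pow_left₀ hy hy₁.le two_ne_zero)
  have hpos : 0 < ‖Gamma (b + y₁ * I)‖ * ‖Gamma (a + y₂ * I)‖ :=
    mul_pos (norm_pos_iff.2 (Gamma_ofReal_add_mul_I_ne_zero b hy₁.ne'))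
      (norm_pos_iff.2 (Gamma_ofReal_add_mul_I_ne_zero a hy₂.ne'))
  nlinarith [mul_lt_mul_of_pos_right hfirst hpos,
    (by positivity : 0 ≤ ‖(b : ℂ) + y₂ * I‖ * ‖(a : ℂ) + y₁ * I‖)]

lemma strictMonoOn_norm_Gamma_div {a b : ℝ} (hba : |b| < a) :
    StrictMonoOn (fun y : ℝ => ‖Gamma (a + y * I)‖ / ‖Gamma (b + y * I)‖) (Set.Ioi 0) := by
  intro y₁ hy₁ y₂ hy₂ hy
  have hnorm_pos (x : ℝ) {y : ℝ} (hy : 0 < y) : 0 < ‖Gamma (x + y * I)‖ :=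
    norm_pos_iff.2 (Gamma_ofReal_add_mul_I_ne_zero x hy.ne')
  rw [div_lt_div_iff₀ (hnorm_pos b hy₁) (hnorm_pos b hy₂)]
  linarith [norm_Gamma_mul_lt hba hy₁ hy]

lemma norm_X (σ t : ℝ) :
    ‖X (σ + t * I)‖ = (5 / Real.pi) ^ (1 / 2 - σ) *
      (‖Gamma ((1 - σ / 2 : ℝ) + (t / 2 : ℝ) * I)‖ /
        ‖Gamma (((1 + σ) / 2 : ℝ) + (t / 2 : ℝ) * I)‖) := by
  have hconj :
      1 - ((σ : ℂ) + t * I) / 2 = starRingEnd ℂ (((1 - σ / 2 : ℝ) : ℂ) + (t / 2 : ℝ) * I) := by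
    simp only [map_add, map_mul, conj_ofReal, conj_I]
    push_cast
    ring
  have hpow : ((5 : ℂ) / Real.pi) = ((5 / Real.pi : ℝ) : ℂ) := by push_cast; ring
  rw [X, norm_div, norm_mul, mul_div_assoc, hconj, Gamma_conj, norm_conj, hpow,
    norm_cpow_eq_rpow_re_of_pos (by positivity)]
  congr 3
  · simp
  · congr 1; push_cast; ring

lemma strictMonoOn_norm_X {σ : ℝ} (hσ : σ < 1 / 2) :
    StrictMonoOn (fun t : ℝ => ‖X (σ + t * I)‖) (Set.Ioi 0) := by
  intro t₁ ht₁ t₂ ht₂ ht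
  simp only [norm_X]
  have hba : |(1 + σ) / 2| < 1 - σ / 2 := abs_lt.2 ⟨by linarith, by linarith⟩
  exact mul_lt_mul_of_pos_left (strictMonoOn_norm_Gamma_div hba (Set.mem_Ioi.2 (half_pos ht₁))
    (Set.mem_Ioi.2 (half_pos ht₂)) (by linarith)) (by positivity)

theorem stmt_18 (σ : ℝ) (hσ : σ < 1/2) :
    {t : ℝ | 0 < t ∧ ‖X (σ + t * I)‖ = 1}.Subsingleton :=
  fun _ ht₁ _ ht₂ => (strictMonoOn_norm_X hσ).injOn ht₁.1 ht₂.1 (ht₁.2.trans ht₂.2.symm)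
end
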